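/- Synthesis is Total for the graph IR λ_G: (1) if Γ^φ | Σ ⊢_M n : T^q ε in the monadic normal form calculus λ_M, then for every last-use map Δ there exist an annotated node 𝐧 and a dependency map δ such that Γ^φ | Σ • Δ ⊢ n : T^q ε ⇝ 𝐧 • δ and 𝐧 erases back to n; and (2) if Γ^φ | Σ ⊢_M g : T^q ε, then for every Δ there exist 𝐠 and δ such that Γ^φ | Σ • Δ ⊢ g : T^q ε ⇝ 𝐠 • δ and 𝐠 erases back to g. -/
import Mathlib


/-- Atoms: term variables and store locations. -/
inductive Atom : Type
  | var : ℕ → Atom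
  | loc : ℕ → Atom
deriving DecidableEq

/-- Qualifiers, effects and observations: finite sets of atoms. -/
abbrev Qual : Type := Finset Atom

/-- Types of the direct-style λ*ε-calculus. `fn x p T ε r U` is `(x : T^p) →^ε U^r`. -/
inductive Ty : Type
  | base : ℕ → Ty
  | fn : ℕ → Qual → Ty → Qual → Qual → Ty → Ty
  | ref : ℕ → Ty

/-- Entries of typing contexts / store typings. -/
abbrev Binding := ℕ × Ty × Qual
abbrev Ctx := List Binding
abbrev StoreTy := List Binding

/-- Lookup in an association list (most recent binding first). -/
def lookupL {α : Type} : List (ℕ × α) → ℕ → Option α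
  | [], _ => none
  | (y, e) :: Γ, x => if x = y then some e else lookupL Γ x

def ctxAtoms (Γ : Ctx) : Qual := (Γ.map (fun b => Atom.var b.1)).toFinset
def styAtoms (St : StoreTy) : Qual := (St.map (fun b => Atom.loc b.1)).toFinset

/-- Qualifier substitution `q[p/x]`. -/
def qsubst (q : Qual) (p : Qual) (x : ℕ) : Qual :=
  if Atom.var x ∈ q then (q.erase (Atom.var x)) ∪ p else q

/-- Term variables occurring in a qualifier. -/
def qVars (q : Qual) : Finset ℕ :=
  q.biUnion (fun a => match a with | Atom.var x => {x} | Atom.loc _ => ∅)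

/-- Free term variables of a type. -/
def Ty.fv : Ty → Finset ℕ
  | .base _ => ∅
  | .ref _ => ∅
  | .fn x p T ε r U => qVars p ∪ T.fv ∪ ((qVars ε ∪ qVars r ∪ U.fv).erase x)

/-- Qualifier substitution, extended homomorphically to types. -/
def Ty.qsubstT : Ty → Qual → ℕ → Ty
  | .base b, _, _ => .base b
  | .ref b, _, _ => .ref b
  | .fn y p T ε r U, q, x =>
      if y = x then .fn y (qsubst p q x) (T.qsubstT q x) ε r U
      else .fn y (qsubst p q x) (T.qsubstT q x) (qsubst ε q x) (qsubst r q x) (U.qsubstT q x)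

/-- One-step reachability between atoms, as determined by Γ and Σ. -/
def Reaches (Γ : Ctx) (St : StoreTy) (a b : Atom) : Prop :=
  match a with
  | .var x => ∃ e : Ty × Qual, lookupL Γ x = some e ∧ b ∈ e.2
  | .loc l => ∃ e : Ty × Qual, lookupL St l = some e ∧ b ∈ e.2

/-- `Sat Γ St q s` : `s` is the saturation (transitive reachability closure) `q*` of `q`. -/
def Sat (Γ : Ctx) (St : StoreTy) (q s : Qual) : Prop :=
  ∀ a, a ∈ s ↔ ∃ b ∈ q, Relation.ReflTransGen (Reaches Γ St) b a

/-- Qualifier subtyping (rule q-sub). -/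
def SubQual (Γ : Ctx) (St : StoreTy) (p q : Qual) : Prop :=
  p ⊆ q ∧ q ⊆ ctxAtoms Γ ∪ styAtoms St

/-- Subtyping on ordinary types (rules s-base, s-ref, s-fun). -/
inductive SubTy : Ctx → StoreTy → Ty → Ty → Prop
  | base {Γ St b} : SubTy Γ St (.base b) (.base b)
  | ref {Γ St b} : SubTy Γ St (.ref b) (.ref b)
  | fn {Γ St x o p q r ε₁ ε₂} {S U T V : Ty} :
      SubTy Γ St U S → SubQual Γ St p o →
      SubTy ((x, U, p) :: Γ) St T V →
      SubQual ((x, U, p) :: Γ) St q r →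
      SubQual ((x, U, p) :: Γ) St ε₁ ε₂ →
      SubTy Γ St (.fn x o S ε₁ q T) (.fn x p U ε₂ r V)

/-- Subtyping on qualified types with effects (rule sqe-sub). -/
def SubQTy (Γ : Ctx) (St : StoreTy) (S : Ty) (p ε₁ : Qual) (T : Ty) (q ε₂ : Qual) : Prop :=
  SubTy Γ St S T ∧ SubQual Γ St p q ∧ SubQual Γ St ε₁ ε₂

/-- Terms of the direct-style λ*ε-calculus. `cst b c` is the constant `c` of base type `b`;
`ref t₁ t₂` is `ref_{t₁} t₂`. -/
inductive Tm : Type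
  | cst : ℕ → ℕ → Tm
  | fvar : ℕ → Tm
  | loc : ℕ → Tm
  | abs : ℕ → Tm → Tm
  | app : Tm → Tm → Tm
  | ref : Tm → Tm → Tm
  | deref : Tm → Tm
  | assign : Tm → Tm → Tm
  | lett : ℕ → Tm → Tm → Tm

/-- The base type `Alloc` of allocation capabilities. -/
def allocB : ℕ := 0
/-- The base type `Unit`. -/
def unitB : ℕ := 1

/-- Term typing `Γ^φ | Σ ⊢ t : T^q ε` of the direct-style λ*ε-calculus. -/
inductive HasTy : Qual → Ctx → StoreTy → Tm → Ty → Qual → Qual → Prop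
  | cst {φ Γ St b c} : HasTy φ Γ St (.cst b c) (.base b) ∅ ∅
  | var {φ Γ St x T q} :
      lookupL Γ x = some (T, q) → Atom.var x ∈ φ →
      HasTy φ Γ St (.fvar x) T {Atom.var x} ∅
  | loc {φ Γ St l T q} :
      lookupL St l = some (T, q) → Atom.loc l ∈ φ →
      HasTy φ Γ St (.loc l) T {Atom.loc l} ∅
  | abs {φ Γ St x t T U p q r ε} :
      HasTy (insert (Atom.var x) q) ((x, T, p) :: Γ) St t U r ε →
      q ⊆ φ →
      HasTy φ Γ St (.abs x t) (.fn x p T ε r U) q ∅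
  | app {φ Γ St t₁ t₂ x T U p q r ps qs ε₁ ε₂ ε₃} :
      HasTy φ Γ St t₁ (.fn x (ps ∩ qs) T ε₃ r U) q ε₁ →
      HasTy φ Γ St t₂ T p ε₂ →
      Sat Γ St p ps → Sat Γ St q qs →
      x ∉ U.fv → ε₃ ⊆ insert (Atom.var x) q → r ⊆ insert (Atom.var x) φ →
      HasTy φ Γ St (.app t₁ t₂) U (qsubst r p x) (qsubst (ε₁ ∪ ε₂ ∪ ε₃) p x)
  | lett {φ Γ St x t₁ t₂ S T p q ps φs ε₁ ε₂} :
      HasTy φ Γ St t₁ S p ε₁ →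
      Sat Γ St p ps → Sat Γ St φ φs →
      HasTy (insert (Atom.var x) φ) ((x, S, ps ∩ φs) :: Γ) St t₂ T q ε₂ →
      x ∉ T.fv →
      HasTy φ Γ St (.lett x t₁ t₂) T (qsubst q p x) (qsubst (ε₁ ∪ ε₂) p x)
  | ref {φ Γ St t₁ t₂ b q ε₁ ε₂} :
      HasTy φ Γ St t₁ (.base allocB) q ε₁ →
      HasTy φ Γ St t₂ (.base b) ∅ ε₂ →
      HasTy φ Γ St (.ref t₁ t₂) (.ref b) ∅ (ε₁ ∪ ε₂ ∪ q)
  | deref {φ Γ St t b q ε} :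
      HasTy φ Γ St t (.ref b) q ε →
      HasTy φ Γ St (.deref t) (.base b) ∅ (ε ∪ q)
  | assign {φ Γ St t₁ t₂ b q ε₁ ε₂} :
      HasTy φ Γ St t₁ (.ref b) q ε₁ →
      HasTy φ Γ St t₂ (.base b) ∅ ε₂ →
      HasTy φ Γ St (.assign t₁ t₂) (.base unitB) ∅ (ε₁ ∪ ε₂ ∪ q)
  | sub {φ Γ St t S T p q ε₁ ε₂} :
      HasTy φ Γ St t S p ε₁ → SubQTy Γ St S p ε₁ T q ε₂ →
      q ⊆ φ → ε₂ ⊆ φ →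
      HasTy φ Γ St t T q ε₂

/-- Name lookup `𝚡 : T^q ∈ Γ^φ | Σ` (rules l-var, l-loc). -/
inductive NameTy : Qual → Ctx → StoreTy → Atom → Ty → Qual → Prop
  | var {φ Γ St x T q} :
      lookupL Γ x = some (T, q) → Atom.var x ∈ φ →
      NameTy φ Γ St (.var x) T q
  | loc {φ Γ St l T q} :
      lookupL St l = some (T, q) → Atom.loc l ∈ φ →
      NameTy φ Γ St (.loc l) T q

/-- Effect dependencies: finite maps from names (atoms) to names, represented as
partial functions. `Δ a = some b` records that `a` was last used at node `b`. -/
def Dep : Type := Atom → Option Atom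

/-- The empty dependency map. -/
def Dep.empty : Dep := fun _ => none

/-- Update `Δ₁, Δ₂` (entries of `Δ₂` take precedence). -/
def Dep.update (Δ₁ Δ₂ : Dep) : Dep := fun a => (Δ₂ a).orElse (fun _ => Δ₁ a)

/-- Restriction `Δ|_s` of the domain of `Δ` to the set `s`. -/
def Dep.restrict (Δ : Dep) (s : Qual) : Dep := fun a => if a ∈ s then Δ a else none

/-- Sub-map relation `δ ⊑ Δ`. -/
def Dep.Sub (δ Δ : Dep) : Prop := ∀ a b, δ a = some b → Δ a = some b

/-- Rewiring `Δ₁[x ⇝ Δ₂]`: entries of `Δ₁` pointing to `x` are rerouted through `Δ₂`. -/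
def Dep.rewire (Δ₁ : Dep) (x : Atom) (Δ₂ : Dep) : Dep :=
  fun a =>
    match Δ₁ a with
    | some b => if b = x then Δ₂ a else some b
    | none => none

/-- Qualifier substitution `Δ[q/x]` acting on the domain of a dependency map:
`x`'s entry is removed and every atom of `q` points to `x`'s former target. -/
def Dep.qsubstD (Δ : Dep) (q : Qual) (x : Atom) : Dep :=
  fun a =>
    match Δ x with
    | some b => if a ∈ q then some b else if a = x then none else Δ a
    | none => if a = x then none else Δ a

/-- `α ↦ x` : the dependency map with domain `α`, each entry pointing to `x`. -/
def mapTo (α : Qual) (x : Atom) : Dep := fun a => if a ∈ α then some x else none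

/-- `↦ x` : everything bound in `Γ` and `Σ` points to `x`. -/
def ptsTo (Γ : Ctx) (St : StoreTy) (z : Atom) : Dep :=
  fun a => if a ∈ ctxAtoms Γ ∪ styAtoms St then some z else none

mutual
  /-- λ_G graph nodes (including introductions `c`, `λx.(g • δ)`, `ref_ℓ ℓ`). -/
  inductive GNode : Type
    | cst : ℕ → ℕ → GNode
    | abs : ℕ → GTm → Dep → GNode
    | app : Atom → Atom → GNode
    | refN : Atom → Atom → GNode
    | deref : Atom → GNode
    | assign : Atom → Atom → GNode
  /-- λ_G graph terms `g ::= 𝚡 | let x = b • δ in g`. -/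
  inductive GTm : Type
    | ret : Atom → GTm
    | lett : ℕ → GBind → Dep → GTm → GTm
  /-- λ_G bindings `b ::= n | g`. -/
  inductive GBind : Type
    | node : GNode → GBind
    | graph : GTm → GBind
end

mutual
  /-- λ_M graph nodes (no dependency annotations). -/
  inductive MNode : Type
    | cst : ℕ → ℕ → MNode
    | abs : ℕ → MTm → MNode
    | app : Atom → Atom → MNode
    | refN : Atom → Atom → MNode
    | deref : Atom → MNode
    | assign : Atom → Atom → MNode
  /-- λ_M graph terms. -/
  inductive MTm : Type
    | ret : Atom → MTm
    | lett : ℕ → MBind → MTm → MTm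
  /-- λ_M bindings. -/
  inductive MBind : Type
    | node : MNode → MBind
    | graph : MTm → MBind
end

mutual
  /-- Erasure of dependency annotations from λ_G nodes. -/
  def GNode.erase : GNode → MNode
    | .cst b c => .cst b c
    | .abs x g _ => .abs x g.erase
    | .app a b => .app a b
    | .refN a b => .refN a b
    | .deref a => .deref a
    | .assign a b => .assign a b
  /-- Erasure of dependency annotations from λ_G graph terms. -/
  def GTm.erase : GTm → MTm
    | .ret a => .ret a
    | .lett x b _ g => .lett x b.erase g.erase
  /-- Erasure of dependency annotations from λ_G bindings. -/
  def GBind.erase : GBind → MBind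
    | .node n => .node n.erase
    | .graph g => .graph g.erase
end

mutual
  /-- λ_M typing of graph nodes, `Γ^φ | Σ ⊢_M n : T^q ε`. -/
  inductive MTyN : Qual → Ctx → StoreTy → MNode → Ty → Qual → Qual → Prop
    | cst {φ Γ St b c} :
        MTyN φ Γ St (.cst b c) (.base b) ∅ ∅
    | abs {φ Γ St x g T U p q r ε} :
        MTyG (insert (Atom.var x) q) ((x, T, p) :: Γ) St g U r ε →
        q ⊆ φ →
        MTyN φ Γ St (.abs x g) (.fn x p T ε r U) q ∅
    | app {φ Γ St a b z T U p q r ps qs ε} :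
        NameTy φ Γ St a (.fn z (ps ∩ qs) T ε r U) q →
        NameTy φ Γ St b T p →
        Sat Γ St p ps → Sat Γ St q qs →
        z ∉ U.fv → ε ⊆ insert (Atom.var z) q → r ⊆ insert (Atom.var z) φ →
        MTyN φ Γ St (.app a b) U (qsubst r p z) (qsubst ε p z)
    | refN {φ Γ St a b bb q} :
        NameTy φ Γ St a (.base allocB) q →
        NameTy φ Γ St b (.base bb) ∅ →
        MTyN φ Γ St (.refN a b) (.ref bb) ∅ {a}
    | deref {φ Γ St a bb q} :
        NameTy φ Γ St a (.ref bb) q →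
        MTyN φ Γ St (.deref a) (.base bb) ∅ {a}
    | assign {φ Γ St a b bb q} :
        NameTy φ Γ St a (.ref bb) q →
        NameTy φ Γ St b (.base bb) ∅ →
        MTyN φ Γ St (.assign a b) (.base unitB) ∅ {a}

  /-- λ_M typing of graph terms. -/
  inductive MTyG : Qual → Ctx → StoreTy → MTm → Ty → Qual → Qual → Prop
    | ret {φ Γ St a T q} :
        NameTy φ Γ St a T q →
        MTyG φ Γ St (.ret a) T {a} ∅
    | lett {φ Γ St x b g S T p q ps φs ε₁ ε₂} :
        MTyB φ Γ St b S p ε₁ →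
        Sat Γ St p ps → Sat Γ St φ φs →
        MTyG (insert (Atom.var x) φ) ((x, S, ps ∩ φs) :: Γ) St g T q ε₂ →
        x ∉ T.fv →
        MTyG φ Γ St (.lett x b g) T (qsubst q p x) (qsubst (ε₁ ∪ ε₂) p x)

  /-- λ_M typing of bindings (including rule b-sub). -/
  inductive MTyB : Qual → Ctx → StoreTy → MBind → Ty → Qual → Qual → Prop
    | node {φ Γ St n T q ε} :
        MTyN φ Γ St n T q ε →
        MTyB φ Γ St (.node n) T q ε
    | graph {φ Γ St g T q ε} :
        MTyG φ Γ St g T q ε →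
        MTyB φ Γ St (.graph g) T q ε
    | sub {φ Γ St b S T p q ε₁ ε₂} :
        MTyB φ Γ St b S p ε₁ →
        SubQTy Γ St S p ε₁ T q ε₂ →
        q ⊆ φ → ε₂ ⊆ φ →
        MTyB φ Γ St b T q ε₂
end

mutual
  /-- Dependency synthesis for λ_M graph nodes:
  `Γ^φ | Σ • Δ ⊢ n : T^q ε ⇝ 𝐧 • δ`. -/
  inductive SynthN : Qual → Ctx → StoreTy → Dep → MNode → Ty → Qual → Qual → GNode → Dep → Prop
    | cst {φ Γ St Δ b c} :
        SynthN φ Γ St Δ (.cst b c) (.base b) ∅ ∅ (.cst b c) Dep.empty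
    | abs {φ Γ St Δ x g T U p q r ε gg δ} :
        SynthG (insert (Atom.var x) q) ((x, T, p) :: Γ) St
          (ptsTo ((x, T, p) :: Γ) St (Atom.var x)) g U r ε gg δ →
        q ⊆ φ →
        SynthN φ Γ St Δ (.abs x g) (.fn x p T ε r U) q ∅ (.abs x gg δ) Dep.empty
    | app {φ Γ St Δ a b z T U p q r ps qs ε εθs} :
        NameTy φ Γ St a (.fn z (ps ∩ qs) T ε r U) q →
        NameTy φ Γ St b T p →
        Sat Γ St p ps → Sat Γ St q qs →
        z ∉ U.fv → ε ⊆ insert (Atom.var z) q → r ⊆ insert (Atom.var z) φ →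
        Sat Γ St (qsubst ε p z) εθs →
        SynthN φ Γ St Δ (.app a b) U (qsubst r p z) (qsubst ε p z)
          (.app a b) (Δ.restrict εθs)
    | refN {φ Γ St Δ a b bb q s} :
        NameTy φ Γ St a (.base allocB) q →
        NameTy φ Γ St b (.base bb) ∅ →
        Sat Γ St {a} s →
        SynthN φ Γ St Δ (.refN a b) (.ref bb) ∅ {a} (.refN a b) (Δ.restrict s)
    | deref {φ Γ St Δ a bb q s} :
        NameTy φ Γ St a (.ref bb) q →
        Sat Γ St {a} s →
        SynthN φ Γ St Δ (.deref a) (.base bb) ∅ {a} (.deref a) (Δ.restrict s)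
    | assign {φ Γ St Δ a b bb q s} :
        NameTy φ Γ St a (.ref bb) q →
        NameTy φ Γ St b (.base bb) ∅ →
        Sat Γ St {a} s →
        SynthN φ Γ St Δ (.assign a b) (.base unitB) ∅ {a} (.assign a b) (Δ.restrict s)

  /-- Dependency synthesis for λ_M graph terms:
  `Γ^φ | Σ • Δ ⊢ g : T^q ε ⇝ 𝐠 • δ`. -/
  inductive SynthG : Qual → Ctx → StoreTy → Dep → MTm → Ty → Qual → Qual → GTm → Dep → Prop
    | ret {φ Γ St Δ a T q} :
        NameTy φ Γ St a T q →
        SynthG φ Γ St Δ (.ret a) T {a} ∅ (.ret a) Dep.empty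
    | lett {φ Γ St Δ x b g S T p q ps φs ε₁ ε₁s ε₂ bb gg δ₁ δ₂} :
        SynthB φ Γ St Δ b S p ε₁ bb δ₁ →
        Sat Γ St p ps → Sat Γ St φ φs → Sat Γ St ε₁ ε₁s →
        SynthG (insert (Atom.var x) φ) ((x, S, ps ∩ φs) :: Γ) St
          (Δ.update (mapTo (insert (Atom.var x) ε₁s) (Atom.var x))) g T q ε₂ gg δ₂ →
        x ∉ T.fv →
        SynthG φ Γ St Δ (.lett x b g) T (qsubst q p x) (qsubst (ε₁ ∪ ε₂) p x)
          (.lett x bb δ₁ gg) (Dep.update δ₁ (δ₂.rewire (Atom.var x) (Δ.restrict ps)))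

  /-- Dependency synthesis for λ_M bindings. -/
  inductive SynthB : Qual → Ctx → StoreTy → Dep → MBind → Ty → Qual → Qual → GBind → Dep → Prop
    | node {φ Γ St Δ n T q ε nn δ} :
        SynthN φ Γ St Δ n T q ε nn δ →
        SynthB φ Γ St Δ (.node n) T q ε (.node nn) δ
    | graph {φ Γ St Δ g T q ε gg δ} :
        SynthG φ Γ St Δ g T q ε gg δ →
        SynthB φ Γ St Δ (.graph g) T q ε (.graph gg) δ
    | sub {φ Γ St Δ b S T p q ε₁ ε₂ ε₂s bb δ₁} :
        SynthB φ Γ St Δ b S p ε₁ bb δ₁ →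
        SubQTy Γ St S p ε₁ T q ε₂ →
        q ⊆ φ → ε₂ ⊆ φ →
        Sat Γ St ε₂ ε₂s →
        SynthB φ Γ St Δ b T q ε₂ bb (Δ.restrict ε₂s)
end


open Classical in
noncomputable def qualsOf (L : List Binding) : Qual :=
  (L.map (fun b => b.2.2)).foldr (· ∪ ·) ∅

theorem mem_qualsOf {L : List Binding} {x : ℕ} {e : Ty × Qual} {a : Atom}
    (h : lookupL L x = some e) (ha : a ∈ e.2) : a ∈ qualsOf L := by
  induction L with
  | nil => simp [lookupL] at h
  | cons b L ih =>
    simp only [lookupL] at h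
    simp only [qualsOf, List.map_cons, List.foldr_cons, Finset.mem_union]
    split at h
    · cases h; exact Or.inl ha
    · exact Or.inr (ih h)

open Classical in
theorem sat_exists (Γ : Ctx) (St : StoreTy) (q : Qual) : ∃ s, Sat Γ St q s := by
  classical
  refine ⟨(q ∪ qualsOf Γ ∪ qualsOf St).filter
    (fun a => ∃ b ∈ q, Relation.ReflTransGen (Reaches Γ St) b a), fun a => ?_⟩
  simp only [Finset.mem_filter, Finset.mem_union]
  constructor
  · exact fun h => h.2
  · rintro ⟨b, hb, hr⟩
    refine ⟨?_, b, hb, hr⟩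
    rcases hr.cases_tail with rfl | ⟨c, _, hstep⟩
    · exact Or.inl (Or.inl hb)
    · cases c with
      | var x =>
        obtain ⟨e, he, hae⟩ := hstep
        exact Or.inl (Or.inr (mem_qualsOf he hae))
      | loc l =>
        obtain ⟨e, he, hae⟩ := hstep
        exact Or.inr (mem_qualsOf he hae)

/-- **Synthesis is Total** for the graph IR λ_G:
(1) if `Γ^φ | Σ ⊢_M n : T^q ε` then for every last-use map `Δ` there are `𝐧` and `δ` with
`Γ^φ | Σ • Δ ⊢ n : T^q ε ⇝ 𝐧 • δ` and `𝐧` erases back to `n`; and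
(2) likewise for graph terms `g`. -/
theorem synthesis_total :
    (∀ (φ : Qual) (Γ : Ctx) (St : StoreTy) (n : MNode) (T : Ty) (q ε : Qual),
      MTyN φ Γ St n T q ε →
      ∀ Δ : Dep, ∃ (n' : GNode) (δ : Dep),
        SynthN φ Γ St Δ n T q ε n' δ ∧ n'.erase = n) ∧
    (∀ (φ : Qual) (Γ : Ctx) (St : StoreTy) (g : MTm) (T : Ty) (q ε : Qual),
      MTyG φ Γ St g T q ε →
      ∀ Δ : Dep, ∃ (g' : GTm) (δ : Dep),
        SynthG φ Γ St Δ g T q ε g' δ ∧ g'.erase = g) := by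
  have main : ∀ (φ : Qual) (Γ : Ctx) (St : StoreTy) (n : MNode) (T : Ty) (q ε : Qual),
      MTyN φ Γ St n T q ε →
      ∀ Δ : Dep, ∃ (n' : GNode) (δ : Dep),
        SynthN φ Γ St Δ n T q ε n' δ ∧ n'.erase = n := by
    intro φ Γ St n T q ε h
    induction h using MTyN.rec
      (motive_2 := fun φ Γ St g T q ε _ => ∀ Δ : Dep, ∃ (g' : GTm) (δ : Dep),
        SynthG φ Γ St Δ g T q ε g' δ ∧ g'.erase = g)
      (motive_3 := fun φ Γ St b T q ε _ => ∀ Δ : Dep, ∃ (b' : GBind) (δ : Dep),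
        SynthB φ Γ St Δ b T q ε b' δ ∧ b'.erase = b)
    all_goals intros
    case cst => rename_i Δ; exact ⟨.cst _ _, Dep.empty, SynthN.cst, rfl⟩
    case abs =>
      rename_i hg hq ih Δ
      obtain ⟨gg, δ, hs, he⟩ := ih _
      exact ⟨.abs _ gg δ, Dep.empty, SynthN.abs hs hq, by simp [GNode.erase, he]⟩
    case app =>
      rename_i ha hb hp hq hz hε hr Δ
      obtain ⟨s, hsat⟩ := sat_exists _ _ _
      exact ⟨.app _ _, _, SynthN.app ha hb hp hq hz hε hr hsat, rfl⟩
    case refN =>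
      rename_i ha hb Δ
      obtain ⟨s, hsat⟩ := sat_exists _ _ _
      exact ⟨.refN _ _, _, SynthN.refN ha hb hsat, rfl⟩
    case deref =>
      rename_i ha Δ
      obtain ⟨s, hsat⟩ := sat_exists _ _ _
      exact ⟨.deref _, _, SynthN.deref ha hsat, rfl⟩
    case assign =>
      rename_i ha hb Δ
      obtain ⟨s, hsat⟩ := sat_exists _ _ _
      exact ⟨.assign _ _, _, SynthN.assign ha hb hsat, rfl⟩
    case ret =>
      rename_i ha Δ
      exact ⟨.ret _, Dep.empty, SynthG.ret ha, rfl⟩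
    case lett =>
      rename_i hb hps hφs hg hx ihb ihg Δ
      obtain ⟨s1, hs1⟩ := sat_exists _ _ _
      obtain ⟨bb, δ₁, hsb, heb⟩ := ihb Δ
      obtain ⟨gg, δ₂, hsg, heg⟩ := ihg _
      exact ⟨.lett _ bb δ₁ gg, _,
        SynthG.lett hsb hps hφs hs1 hsg hx, by simp [GTm.erase, heb, heg]⟩
    case node =>
      rename_i hn ih Δ
      obtain ⟨nn, δ, hs, he⟩ := ih Δ
      exact ⟨.node nn, δ, SynthB.node hs, by simp [GBind.erase, he]⟩
    case graph =>
      rename_i hg ih Δ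
      obtain ⟨gg, δ, hs, he⟩ := ih Δ
      exact ⟨.graph gg, δ, SynthB.graph hs, by simp [GBind.erase, he]⟩
    case sub =>
      rename_i hb hsub hqφ hεφ ih Δ
      obtain ⟨s, hsat⟩ := sat_exists _ _ _
      obtain ⟨bb, δ, hs, he⟩ := ih Δ
      exact ⟨bb, _, SynthB.sub hs hsub hqφ hεφ hsat, he⟩
  refine ⟨main, ?_⟩
  intro φ Γ St g T q ε h
  induction h using MTyG.rec
    (motive_1 := fun φ Γ St n T q ε _ => ∀ Δ : Dep, ∃ (n' : GNode) (δ : Dep),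
      SynthN φ Γ St Δ n T q ε n' δ ∧ n'.erase = n)
    (motive_3 := fun φ Γ St b T q ε _ => ∀ Δ : Dep, ∃ (b' : GBind) (δ : Dep),
      SynthB φ Γ St Δ b T q ε b' δ ∧ b'.erase = b)
  all_goals intros
  case cst => rename_i Δ; exact ⟨.cst _ _, Dep.empty, SynthN.cst, rfl⟩
  case abs =>
    rename_i hg hq ih Δ
    obtain ⟨gg, δ, hs, he⟩ := ih _
    exact ⟨.abs _ gg δ, Dep.empty, SynthN.abs hs hq, by simp [GNode.erase, he]⟩
  case app =>
    rename_i ha hb hp hq hz hε hr Δ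
    obtain ⟨s, hsat⟩ := sat_exists _ _ _
    exact ⟨.app _ _, _, SynthN.app ha hb hp hq hz hε hr hsat, rfl⟩
  case refN =>
    rename_i ha hb Δ
    obtain ⟨s, hsat⟩ := sat_exists _ _ _
    exact ⟨.refN _ _, _, SynthN.refN ha hb hsat, rfl⟩
  case deref =>
    rename_i ha Δ
    obtain ⟨s, hsat⟩ := sat_exists _ _ _
    exact ⟨.deref _, _, SynthN.deref ha hsat, rfl⟩
  case assign =>
    rename_i ha hb Δ
    obtain ⟨s, hsat⟩ := sat_exists _ _ _
    exact ⟨.assign _ _, _, SynthN.assign ha hb hsat, rfl⟩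
  case ret =>
    rename_i ha Δ
    exact ⟨.ret _, Dep.empty, SynthG.ret ha, rfl⟩
  case lett =>
    rename_i hb hps hφs hg hx ihb ihg Δ
    obtain ⟨s1, hs1⟩ := sat_exists _ _ _
    obtain ⟨bb, δ₁, hsb, heb⟩ := ihb Δ
    obtain ⟨gg, δ₂, hsg, heg⟩ := ihg _
    exact ⟨.lett _ bb δ₁ gg, _,
      SynthG.lett hsb hps hφs hs1 hsg hx, by simp [GTm.erase, heb, heg]⟩
  case node =>
    rename_i hn ih Δ
    obtain ⟨nn, δ, hs, he⟩ := ih Δ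
    exact ⟨.node nn, δ, SynthB.node hs, by simp [GBind.erase, he]⟩
  case graph =>
    rename_i hg ih Δ
    obtain ⟨gg, δ, hs, he⟩ := ih Δ
    exact ⟨.graph gg, δ, SynthB.graph hs, by simp [GBind.erase, he]⟩
  case sub =>
    rename_i hb hsub hqφ hεφ ih Δ
    obtain ⟨s, hsat⟩ := sat_exists _ _ _
    obtain ⟨bb, δ, hs, he⟩ := ih Δ
    exact ⟨bb, _, SynthB.sub hs hsub hqφ hεφ hsat, he⟩
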